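/- Let $Y$ be an $n \times (n+1)$ matrix of indeterminates and $S \subseteq [n]$ nonempty. The generating set consisting of the linear forms $f_j = \sum_{i \in S} Y_{ji}$ ($1 \leq j \leq n$) and all maximal minors $\det Y(j)$ ($0 \leq j \leq n$) is a Gr\"obner basis of the ideal they generate, with respect to the lexicographic-type term order in which $Y_{10} \prec Y_{11} \prec \cdots \prec Y_{1n} \prec Y_{20} \prec \cdots \prec Y_{nn}$ (rows completed left to right, with the first column entry smallest in each row), assuming without loss of generality that the columns indexed by $S$ occur consecutively starting at column $1$. -/

import Mathlib

/-!
The linear form `f_j` has leading monomial `Y_{jk}`, where `k` is the last column of `S`. So let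
`f` be in the ideal with no `Y_{jk}` dividing its leading monomial, and substitute
`φ : Y_{jk} ↦ Y_{jk} - f_j`. This replaces each variable by a combination of variables that are not
larger, so `φ` raises no monomial and fixes the leading term of `f`. It kills every `f_j`, and as the
columns of `φ(Y)` indexed by `S` sum to zero, every maximal minor of `φ(Y)` is a multiple of
`det Y(k)`, which `φ` fixes. Hence `φ(f) = b · det Y(k)`, and the leading monomial of `det Y(k)`
divides that of `f`.
-/

open MvPolynomial

noncomputable section Stmt7

/-- The variable index set for the `n × (n+1)` matrix `Y = (Y_{ij})`, ordered
so that the most significant variable (for the lexicographic monomial order,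
which looks at the smallest index first) is `Y_{nn}` and the least significant
is `Y_{10}`: rows are completed left to right, the first-column entry being
smallest within each row. -/
abbrev Stmt7.Idx (n : ℕ) := (Lex (Fin n × Fin (n + 1)))ᵒᵈ

instance (n : ℕ) : WellFoundedGT (Stmt7.Idx n) := Finite.to_wellFoundedGT

/-- The lexicographic monomial order realizing the term order
`Y_{10} ≺ Y_{11} ≺ ⋯ ≺ Y_{1n} ≺ Y_{20} ≺ ⋯ ≺ Y_{nn}`. -/
def Stmt7.ord (n : ℕ) : MonomialOrder (Stmt7.Idx n) := MonomialOrder.lex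

/-- The leading exponent (multidegree of the leading monomial) of a nonzero
polynomial with respect to a monomial order (junk value `0` for `f = 0`). -/
def Stmt7.leadExp {σ : Type*} (m : MonomialOrder σ) {K : Type*} [Field K]
    (f : MvPolynomial σ K) : σ →₀ ℕ :=
  if h : f.support.Nonempty then
    m.toSyn.symm ((f.support.image m.toSyn).max' (h.image _))
  else 0

/-- A set `G` is a Gröbner basis of the ideal it generates iff the leading
monomial of every nonzero element of the ideal is divisible by the leading
monomial of some element of `G`. -/
def Stmt7.IsGroebnerBasis {σ : Type*} (m : MonomialOrder σ) {K : Type*}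
    [Field K] (G : Set (MvPolynomial σ K)) : Prop :=
  ∀ f ∈ Ideal.span G, f ≠ 0 →
    ∃ g ∈ G, g ≠ 0 ∧ Stmt7.leadExp m g ≤ Stmt7.leadExp m f

theorem Stmt7.leadExp_eq_degree {σ : Type*} (m : MonomialOrder σ) {K : Type*} [Field K]
    (f : MvPolynomial σ K) : Stmt7.leadExp m f = m.degree f := by
  unfold Stmt7.leadExp MonomialOrder.degree
  split_ifs with hf
  · rw [Finset.max'_eq_sup', Finset.sup'_eq_sup, Finset.sup_image, Function.id_comp]
  · rw [Finset.not_nonempty_iff_eq_empty.mp hf, Finset.sup_empty]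
    exact (map_zero m.toSyn.symm).symm

namespace MonomialOrder

variable {σ R : Type*} [CommRing R] (m : MonomialOrder σ) {s : σ → MvPolynomial σ R}

theorem degree_aeval_monomial_le (hs : ∀ v, m.degree (s v) ≼[m] Finsupp.single v 1)
    (d : σ →₀ ℕ) (c : R) : m.degree (aeval s (monomial d c)) ≼[m] d := by
  rw [aeval_monomial, algebraMap_eq]
  calc m.toSyn (m.degree (C c * d.prod fun v e => s v ^ e))
      ≤ m.toSyn (m.degree (C c : MvPolynomial σ R) + m.degree (d.prod fun v e => s v ^ e)) :=
        m.degree_mul_le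
    _ = m.toSyn (m.degree (∏ v ∈ d.support, s v ^ d v)) := by rw [m.degree_C, zero_add]; rfl
    _ ≤ ∑ v ∈ d.support, m.toSyn (m.degree (s v ^ d v)) := by
      rw [← map_sum]; exact m.degree_prod_le
    _ ≤ ∑ v ∈ d.support, m.toSyn (d v • Finsupp.single v 1) := by
      gcongr with v
      rw [map_nsmul]
      exact (m.degree_pow_le _).trans (by rw [map_nsmul]; exact nsmul_le_nsmul_right (hs v) _)
    _ = m.toSyn d := by
      simp only [← map_sum, Finsupp.smul_single_one]
      rw [← Finsupp.sum, Finsupp.sum_single]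

theorem degree_aeval_le (hs : ∀ v, m.degree (s v) ≼[m] Finsupp.single v 1)
    (p : MvPolynomial σ R) : m.degree (aeval s p) ≼[m] m.degree p := by
  conv_lhs => rw [p.as_sum, map_sum]
  exact m.degree_sum_le.trans <| Finset.sup_le fun d hd =>
    (m.degree_aeval_monomial_le hs d _).trans (m.le_degree hd)

theorem aeval_leadingTerm {p : MvPolynomial σ R}
    (hfix : ∀ v ∈ (m.degree p).support, s v = X v) :
    aeval s (m.leadingTerm p) = m.leadingTerm p := by
  rw [leadingTerm, aeval_monomial, monomial_eq, algebraMap_eq]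
  exact congrArg _ (Finsupp.prod_congr fun v hv => by rw [hfix v hv])

theorem leadingTerm_aeval (hs : ∀ v, m.degree (s v) ≼[m] Finsupp.single v 1)
    {p : MvPolynomial σ R} (hfix : ∀ v ∈ (m.degree p).support, s v = X v) :
    m.leadingTerm (aeval s p) = m.leadingTerm p := by
  by_cases hp : m.degree p = 0
  · rw [m.eq_C_of_degree_eq_zero hp, aeval_C, algebraMap_eq]
  have hsplit : aeval s p = m.leadingTerm p + aeval s (p - m.leadingTerm p) := by
    rw [map_sub, m.aeval_leadingTerm hfix, add_sub_cancel]
  have hlt : m.degree (aeval s (p - m.leadingTerm p)) ≺[m] m.degree (m.leadingTerm p) := by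
    rw [degree_leadingTerm]
    exact (m.degree_aeval_le hs _).trans_lt (m.degree_sub_leadingTerm_lt_degree hp)
  rw [hsplit, leadingTerm_eq_leadingTerm_iff, m.leadingCoeff_add_of_lt hlt,
    m.degree_add_of_lt hlt, leadingCoeff_leadingTerm, degree_leadingTerm]
  exact ⟨rfl, rfl⟩

theorem degree_le_degree_of_dvd [NoZeroDivisors R] {a p : MvPolynomial σ R} (h : a ∣ p)
    (hp : p ≠ 0) : m.degree a ≤ m.degree p := by
  obtain ⟨b, rfl⟩ := h
  rw [m.degree_mul (left_ne_zero_of_mul hp) (right_ne_zero_of_mul hp)]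
  exact le_self_add

end MonomialOrder

theorem Function.Injective.exists_perm_comp_eq {α β : Type*} [Finite α] {f g : α → β}
    (hg : Function.Injective g) (hgf : Set.range g ⊆ Set.range f) :
    ∃ τ : Equiv.Perm α, f ∘ τ = g := by
  choose τ hτ using fun a => hgf ⟨a, rfl⟩
  have hτinj : Function.Injective τ := fun a b hab => hg (by rw [← hτ, ← hτ, hab])
  exact ⟨Equiv.ofBijective τ (Finite.injective_iff_bijective.mp hτinj), funext hτ⟩

open Matrix in
theorem Matrix.det_submatrix_succAbove_dvd_of_mulVec_eq_zero {R : Type*} [CommRing R] {n : ℕ}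
    (M : Matrix (Fin n) (Fin (n + 1)) R) {c : Fin (n + 1) → R} (hc : M *ᵥ c = 0)
    (j k : Fin (n + 1)) :
    (M.submatrix id k.succAbove).det ∣ c k * (M.submatrix id j.succAbove).det := by
  obtain rfl | hjk := eq_or_ne j k
  · exact dvd_mul_left _ _
  obtain ⟨b₀, hb₀⟩ := Fin.exists_succAbove_eq hjk.symm
  set N := M.submatrix id j.succAbove
  -- `c k • N.det` is the determinant of `N` with column `b₀` (column `k` of `M`) replaced by
  -- `∑_{i ≠ j} c i • Mᵢ = -c j • Mⱼ`, a column permutation of the minor at `k`.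
  have hcol : (fun a => ∑ b, c (j.succAbove b) • N a b) = -c j • fun a => M a j := by
    funext a
    have := congrFun hc a
    rw [mulVec, dotProduct, Fin.sum_univ_succAbove _ j, Pi.zero_apply] at this
    simp only [Pi.smul_apply, smul_eq_mul, submatrix_apply, id, N, mul_comm (c _)]
    linear_combination this
  have hswap : N.updateCol b₀ (fun a => M a j) = M.submatrix id (Equiv.swap j k ∘ j.succAbove) := by
    ext a b
    obtain rfl | hb := eq_or_ne b b₀
    · simp [hb₀]
    · have : j.succAbove b ≠ k := hb₀ ▸ fun h => hb (Fin.succAbove_right_injective h)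
      simp [updateCol_ne hb, Equiv.swap_apply_of_ne_of_ne (Fin.succAbove_ne j b) this, N]
  obtain ⟨τ, hτ⟩ := ((Equiv.injective _).comp Fin.succAbove_right_injective).exists_perm_comp_eq
    (f := k.succAbove) (g := Equiv.swap j k ∘ j.succAbove)
    (by
      rintro _ ⟨b, rfl⟩
      rw [Fin.range_succAbove]
      simp [Equiv.swap_apply_eq_iff, Fin.succAbove_ne j b])
  rw [show c k * N.det = (N.updateCol b₀ fun a => ∑ b, c (j.succAbove b) • N a b).det by
      rw [det_updateCol_sum, hb₀, smul_eq_mul], hcol, det_updateCol_smul, hswap, ← hτ]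
  change _ ∣ -c j * ((M.submatrix id k.succAbove).submatrix id τ).det
  rw [det_permute']
  exact (dvd_mul_left _ _).mul_left _

namespace Stmt7

open scoped MonomialOrder

variable (K : Type*) [Field K] {n : ℕ}

abbrev var (j : Fin n) (i : Fin (n + 1)) : Idx n := OrderDual.toDual (toLex (j, i))

def genericMatrix (n : ℕ) : Matrix (Fin n) (Fin (n + 1)) (MvPolynomial (Idx n) K) :=
  Matrix.of fun j i => X (var j i)

def rowSum (k : Fin (n + 1)) (j : Fin n) : MvPolynomial (Idx n) K :=
  ∑ i ∈ Finset.Icc 1 k, X (var j i)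

def generators (k : Fin (n + 1)) : Set (MvPolynomial (Idx n) K) :=
  {f | ∃ j, f = rowSum K k j} ∪
    {f | ∃ j : Fin (n + 1), f = ((genericMatrix K n).submatrix id j.succAbove).det}

-- The substitution `φ` above, on the variables.
def elimCol (k : Fin (n + 1)) (v : Idx n) : MvPolynomial (Idx n) K :=
  X v - if (ofLex v.ofDual).2 = k then rowSum K k (ofLex v.ofDual).1 else 0

variable {K}

theorem elimCol_var (k : Fin (n + 1)) (j : Fin n) (i : Fin (n + 1)) :
    elimCol K k (var j i) = X (var j i) - if i = k then rowSum K k j else 0 :=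
  rfl

theorem single_var_le_single_var {j : Fin n} {i i' : Fin (n + 1)} (h : i ≤ i') :
    Finsupp.single (var j i) 1 ≼[ord n] Finsupp.single (var j i') 1 :=
  Finsupp.Lex.single_le_iff.mpr (Prod.Lex.toLex_le_toLex.mpr (Or.inr ⟨rfl, h⟩))

theorem degree_rowSum_le (k : Fin (n + 1)) (j : Fin n) :
    (ord n).degree (rowSum K k j) ≼[ord n] Finsupp.single (var j k) 1 :=
  (ord n).degree_sum_le.trans <| Finset.sup_le fun _ hi =>
    (ord n).degree_X_le_single.trans (single_var_le_single_var (Finset.mem_Icc.mp hi).2)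

theorem degree_rowSum {k : Fin (n + 1)} (hk : 1 ≤ k) (j : Fin n) :
    (ord n).degree (rowSum K k j) = Finsupp.single (var j k) 1 := by
  have hmem : Finsupp.single (var j k) 1 ∈ (rowSum K k j).support := by
    rw [mem_support_iff, rowSum, coeff_sum,
      Finset.sum_eq_single_of_mem k (Finset.mem_Icc.mpr ⟨hk, le_rfl⟩)]
    · simp
    · intro i _ hik
      simp [coeff_X, Finsupp.single_left_inj one_ne_zero, hik]
  exact (ord n).toSyn.injective (le_antisymm (degree_rowSum_le k j) ((ord n).le_degree hmem))

theorem degree_elimCol_le (k : Fin (n + 1)) (v : Idx n) :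
    (ord n).degree (elimCol K k v) ≼[ord n] Finsupp.single v 1 := by
  obtain ⟨j, i⟩ := v
  change (ord n).degree (elimCol K k (var j i)) ≼[ord n] Finsupp.single (var j i) 1
  rw [elimCol_var]
  split_ifs with hk
  · rw [hk]
    exact (ord n).degree_sub_le.trans (sup_le (ord n).degree_X_le_single (degree_rowSum_le k _))
  · rw [sub_zero]
    exact (ord n).degree_X_le_single

theorem aeval_elimCol_rowSum {k : Fin (n + 1)} (hk : 1 ≤ k) (j : Fin n) :
    aeval (elimCol K k) (rowSum K k j) = 0 := by
  rw [rowSum, map_sum]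
  simp only [aeval_X, elimCol_var, Finset.sum_sub_distrib, Finset.sum_ite_eq',
    Finset.mem_Icc.mpr ⟨hk, le_rfl⟩, if_true]
  exact sub_self _

open Matrix in
theorem genericMatrix_map_elimCol_mulVec {k : Fin (n + 1)} (hk : 1 ≤ k) :
    (genericMatrix K n).map (aeval (elimCol K k)) *ᵥ
      (fun i => if i ∈ Finset.Icc 1 k then 1 else 0) = 0 := by
  ext j
  simp only [mulVec, dotProduct, map_apply, mul_ite, mul_one, mul_zero, Finset.sum_ite_mem,
    Finset.univ_inter, Pi.zero_apply]
  rw [← aeval_elimCol_rowSum hk j, rowSum, map_sum]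
  rfl

theorem genericMatrix_minor_dvd_aeval_elimCol {k : Fin (n + 1)} (hk : 1 ≤ k) (j : Fin (n + 1)) :
    ((genericMatrix K n).submatrix id k.succAbove).det ∣
      aeval (elimCol K k) ((genericMatrix K n).submatrix id j.succAbove).det := by
  have hfix : ((genericMatrix K n).map (aeval (elimCol K k))).submatrix id k.succAbove =
      (genericMatrix K n).submatrix id k.succAbove := by
    ext a b
    simp [genericMatrix, elimCol_var, Fin.succAbove_ne]
  have := Matrix.det_submatrix_succAbove_dvd_of_mulVec_eq_zero _
    (genericMatrix_map_elimCol_mulVec (K := K) hk) j k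
  rw [hfix, if_pos (Finset.mem_Icc.mpr ⟨hk, le_rfl⟩), one_mul, Matrix.submatrix_map] at this
  rwa [AlgHom.map_det]

theorem genericMatrix_minor_dvd_aeval_elimCol_of_mem_span {k : Fin (n + 1)} (hk : 1 ≤ k)
    {f : MvPolynomial (Idx n) K} (hf : f ∈ Ideal.span (generators K k)) :
    ((genericMatrix K n).submatrix id k.succAbove).det ∣ aeval (elimCol K k) f := by
  suffices f ∈ (Ideal.span {((genericMatrix K n).submatrix id k.succAbove).det}).comap
      (aeval (elimCol K k)) from Ideal.mem_span_singleton.mp this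
  refine Ideal.span_le.mpr ?_ hf
  rintro g (⟨j, rfl⟩ | ⟨j, rfl⟩) <;> rw [SetLike.mem_coe, Ideal.mem_comap, Ideal.mem_span_singleton]
  · rw [aeval_elimCol_rowSum hk]
    exact dvd_zero _
  · exact genericMatrix_minor_dvd_aeval_elimCol hk j

theorem elimCol_eq_X {k : Fin (n + 1)} {d : Idx n →₀ ℕ} (hd : ∀ j, d (var j k) = 0) :
    ∀ v ∈ d.support, elimCol K k v = X v := by
  intro v hv
  rw [elimCol, if_neg, sub_zero]
  intro hcol
  apply Finsupp.mem_support_iff.mp hv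
  rw [← hd (ofLex v.ofDual).1, ← hcol]
  rfl

end Stmt7

open Stmt7 in
/-- for the `n × (n+1)` matrix of indeterminates `Y` and a
nonempty `S ⊆ [n]`, WLOG consisting of consecutive columns `1, …, k`, the
linear forms `f_j = ∑_{i ∈ S} Y_{ji}` (`1 ≤ j ≤ n`) together with all maximal
minors `det Y(ĵ)` (`0 ≤ j ≤ n`) form a Gröbner basis of the ideal they
generate, for the term order above. -/
theorem stmt7 {K : Type*} [Field K] (n : ℕ) (k : Fin (n + 1))
    (hk : 1 ≤ (k : ℕ)) :
    Stmt7.IsGroebnerBasis (Stmt7.ord n)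
      (({f | ∃ j : Fin n, f = ∑ i ∈ Finset.Icc (1 : Fin (n + 1)) k,
            X (OrderDual.toDual (toLex (j, i)))} ∪
        {f | ∃ j : Fin (n + 1), f =
            (Matrix.of fun a b : Fin n =>
              (X (OrderDual.toDual (toLex (a, j.succAbove b))) :
                MvPolynomial (Stmt7.Idx n) K)).det})
        : Set (MvPolynomial (Stmt7.Idx n) K)) := by
  have hk1 : (1 : Fin (n + 1)) ≤ k := by
    rw [Fin.le_def, Fin.val_one']
    exact (Nat.mod_le _ _).trans hk
  change IsGroebnerBasis (ord n) (generators K k)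
  intro f hf hf0
  simp only [leadExp_eq_degree]
  by_cases hfk : ∃ j, (ord n).degree f (var j k) ≠ 0
  · obtain ⟨j, hj⟩ := hfk
    refine ⟨rowSum K k j, Or.inl ⟨j, rfl⟩,
      (ord n).ne_zero_of_degree_ne_zero (by simp [degree_rowSum hk1]), ?_⟩
    rw [degree_rowSum hk1, Finsupp.single_le_iff]
    exact Nat.one_le_iff_ne_zero.mpr hj
  push Not at hfk
  have hlead : (ord n).leadingTerm (aeval (elimCol K k) f) = (ord n).leadingTerm f :=
    (ord n).leadingTerm_aeval (degree_elimCol_le k) (elimCol_eq_X hfk)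
  have hφf : aeval (elimCol K k) f ≠ 0 := fun h => hf0 <| by
    rwa [← (ord n).leadingTerm_eq_zero_iff, ← hlead, (ord n).leadingTerm_eq_zero_iff]
  have hdvd := genericMatrix_minor_dvd_aeval_elimCol_of_mem_span hk1 hf
  refine ⟨_, Or.inr ⟨k, rfl⟩, ne_zero_of_dvd_ne_zero hφf hdvd, ?_⟩
  rw [← ((ord n).leadingTerm_eq_leadingTerm_iff.mp hlead).2]
  exact (ord n).degree_le_degree_of_dvd hdvd hφf

end Stmt7
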